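/- For the self-similar measure P = (1/4)·P∘S₁⁻¹ + (3/4)·P∘S₂⁻¹ with S₁(x) = x/4, S₂(x) = x/2 + 1/2, and for any word σ ∈ {1,2}* and any a ∈ ℝ: ∫_{J_σ} (x − a)² dP(x) = p_σ·(s_σ²·V + (S_σ(2/3) − a)²), where p_σ is the product of the probabilities p₁ = 1/4, p₂ = 3/4 along σ, s_σ is the product of the contraction ratios s₁ = 1/4, s₂ = 1/2 along σ, J_σ = S_σ([0,1]), and V = 16/153. -/

import Mathlib

open MeasureTheory Set
open scoped ENNReal Classical

noncomputable section

/-- The similarity map `S₁(x) = x/4`. -/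
def S1 (x : ℝ) : ℝ := x / 4

/-- The similarity map `S₂(x) = x/2 + 1/2`. -/
def S2 (x : ℝ) : ℝ := x / 2 + 1 / 2

/-- `P` satisfies the self-similarity relation `P = (1/4)·P∘S₁⁻¹ + (3/4)·P∘S₂⁻¹`. -/
def SelfSimilar (P : Measure ℝ) : Prop :=
  P = (1/4 : ℝ≥0∞) • P.map S1 + (3/4 : ℝ≥0∞) • P.map S2

/-- For a word `σ` over `{1,2}` (encoded as `Fin 2`, `0 ↦ S₁`, `1 ↦ S₂`),
the composition `S_σ = S_{σ₁} ∘ ⋯ ∘ S_{σ_k}`. -/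
def Sw : List (Fin 2) → ℝ → ℝ
  | [] => id
  | i :: σ => (if i = 0 then S1 else S2) ∘ Sw σ

/-- `p_σ`, the product of the probabilities `p₁ = 1/4`, `p₂ = 3/4` along `σ`. -/
def pw : List (Fin 2) → ℝ
  | [] => 1
  | i :: σ => (if i = 0 then (1:ℝ)/4 else 3/4) * pw σ

/-- `s_σ`, the product of the contraction ratios `s₁ = 1/4`, `s₂ = 1/2` along `σ`. -/
def sw : List (Fin 2) → ℝ
  | [] => 1
  | i :: σ => (if i = 0 then (1:ℝ)/4 else 1/2) * sw σ

/-- `c(σ)`, the number of occurrences of the symbol `1` (encoded `0`) in `σ`. -/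
def cnt (σ : List (Fin 2)) : ℕ := σ.count 0

/-- The cylinder interval `J_σ = S_σ([0,1])`. -/
def J (σ : List (Fin 2)) : Set ℝ := Sw σ '' Set.Icc 0 1

/-- The distortion error `V(P;α) = ∫ min_{a ∈ α} (x-a)² dP`. -/
def distortion (P : Measure ℝ) (α : Finset ℝ) : ℝ :=
  ∫ x, sInf ((fun a => (x - a) ^ 2) '' (α : Set ℝ)) ∂P

/-- The `n`-th quantization error `V_n`. -/
def qError (P : Measure ℝ) (n : ℕ) : ℝ :=
  sInf {e | ∃ α : Finset ℝ, α.Nonempty ∧ α.card ≤ n ∧ e = distortion P α}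

/-- `α` is an optimal set of `n`-means for `P`. -/
def IsOptimal (P : Measure ℝ) (n : ℕ) (α : Finset ℝ) : Prop :=
  α.Nonempty ∧ α.card ≤ n ∧ distortion P α = qError P n

/-- `q_σ := P(J_σ) · λ(J_σ)²`. -/
def qnt (P : Measure ℝ) (σ : List (Fin 2)) : ℝ :=
  (P (J σ)).toReal * ((volume (J σ)).toReal) ^ 2

section Aux

lemma measurable_S1 : Measurable S1 := by unfold S1; fun_prop
lemma measurable_S2 : Measurable S2 := by unfold S2; fun_prop

lemma S1_inj : Function.Injective S1 := fun x y h => by simp only [S1] at h; linarith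
lemma S2_inj : Function.Injective S2 := fun x y h => by simp only [S2] at h; linarith

variable (P : Measure ℝ) [IsProbabilityMeasure P]

lemma step_lemma (hP : SelfSimilar P) (M : ℝ) (hM : 0 ≤ M) :
    P (Icc (-M) (1+M))ᶜ ≤ P (Icc (-(2*M)) (1+2*M))ᶜ := by
  have hms : MeasurableSet (Icc (-M) (1+M))ᶜ := measurableSet_Icc.compl
  have h1 : S1 ⁻¹' (Icc (-M) (1+M))ᶜ ⊆ (Icc (-(2*M)) (1+2*M))ᶜ := by
    intro x hx
    simp only [mem_compl_iff, mem_Icc, not_and_or, not_le, S1, mem_preimage] at hx ⊢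
    rcases hx with h | h
    · left; linarith
    · right; linarith
  have h2 : S2 ⁻¹' (Icc (-M) (1+M))ᶜ ⊆ (Icc (-(2*M)) (1+2*M))ᶜ := by
    intro x hx
    simp only [mem_compl_iff, mem_Icc, not_and_or, not_le, S2, mem_preimage] at hx ⊢
    rcases hx with h | h
    · left; linarith
    · right; linarith
  calc P (Icc (-M) (1+M))ᶜ
      = ((1/4 : ℝ≥0∞) • P.map S1 + (3/4 : ℝ≥0∞) • P.map S2) (Icc (-M) (1+M))ᶜ := by rw [← hP]
    _ = 1/4 * P (S1 ⁻¹' (Icc (-M) (1+M))ᶜ) + 3/4 * P (S2 ⁻¹' (Icc (-M) (1+M))ᶜ) := by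
        rw [Measure.add_apply, Measure.smul_apply, Measure.smul_apply,
          Measure.map_apply measurable_S1 hms, Measure.map_apply measurable_S2 hms,
          smul_eq_mul, smul_eq_mul]
    _ ≤ 1/4 * P (Icc (-(2*M)) (1+2*M))ᶜ + 3/4 * P (Icc (-(2*M)) (1+2*M))ᶜ := by
        gcongr

    _ = P (Icc (-(2*M)) (1+2*M))ᶜ := by
        rw [← add_mul, ENNReal.div_add_div_same,
          show (1:ℝ≥0∞)+3 = 4 by norm_num,
          ENNReal.div_self (by norm_num) (by norm_num), one_mul]

lemma ae_mem_Icc (hP : SelfSimilar P) : ∀ᵐ x ∂P, x ∈ Icc (0:ℝ) 1 := by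
  have key : ∀ M : ℝ, 0 < M → P (Icc (-M) (1+M))ᶜ = 0 := by
    intro M hM
    have hmono : ∀ n : ℕ, P (Icc (-M) (1+M))ᶜ ≤ P (Icc (-(2^n*M)) (1+2^n*M))ᶜ := by
      intro n
      induction n with
      | zero => simp
      | succ n ih =>
        refine ih.trans ?_
        have := step_lemma P hP (2^n*M) (by positivity)
        rw [show (2:ℝ)^(n+1)*M = 2*(2^n*M) by ring]
        exact this
    have hanti : Antitone (fun n : ℕ => (Icc (-(2^n*M)) (1+2^n*M))ᶜ) := by
      intro n m hnm
      apply compl_subset_compl.2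
      apply Icc_subset_Icc
      · have : (2:ℝ)^n*M ≤ 2^m*M := by
          apply mul_le_mul_of_nonneg_right _ hM.le
          exact pow_le_pow_right₀ one_le_two hnm
        linarith
      · have : (2:ℝ)^n*M ≤ 2^m*M := by
          apply mul_le_mul_of_nonneg_right _ hM.le
          exact pow_le_pow_right₀ one_le_two hnm
        linarith
    have hint : ⋂ n : ℕ, (Icc (-(2^n*M)) (1+2^n*M))ᶜ = ∅ := by
      ext x
      simp only [mem_iInter, mem_empty_iff_false, iff_false, not_forall]
      obtain ⟨n, hn⟩ := pow_unbounded_of_one_lt (|x|/M) (y := (2:ℝ)) one_lt_two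
      refine ⟨n, ?_⟩
      have hx : |x| < 2^n * M := by
        rw [div_lt_iff₀ hM] at hn; linarith
      have := abs_lt.1 hx
      simp only [mem_compl_iff, mem_Icc, not_not]
      constructor <;> nlinarith [pow_pos (by norm_num : (0:ℝ)<2) n]
    have htend := tendsto_measure_iInter_atTop (μ := P)
      (fun n : ℕ => (measurableSet_Icc.compl).nullMeasurableSet)
      hanti ⟨0, measure_ne_top P _⟩
    rw [hint] at htend
    simp only [measure_empty] at htend
    have : P (Icc (-M) (1+M))ᶜ ≤ 0 := ge_of_tendsto htend (Filter.Eventually.of_forall hmono)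
    exact le_antisymm this bot_le
  rw [ae_iff]
  have hsub : {x : ℝ | ¬ x ∈ Icc (0:ℝ) 1} ⊆ ⋃ n : ℕ, (Icc (-(1/(n+1):ℝ)) (1+1/(n+1)))ᶜ := by
    intro x hx
    simp only [mem_setOf_eq, mem_Icc, not_and_or, not_le] at hx
    simp only [mem_iUnion, mem_compl_iff, mem_Icc, not_and_or, not_le]
    rcases hx with h | h
    · obtain ⟨n, hn⟩ := exists_nat_one_div_lt (show (0:ℝ) < -x by linarith)
      exact ⟨n, Or.inl (by linarith)⟩
    · obtain ⟨n, hn⟩ := exists_nat_one_div_lt (show (0:ℝ) < x - 1 by linarith)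
      exact ⟨n, Or.inr (by linarith)⟩
  exact measure_mono_null hsub (measure_iUnion_null fun n => key _ (by positivity))

lemma integrable_of_bdd (hae : ∀ᵐ x ∂P, x ∈ Icc (0:ℝ) 1) {f : ℝ → ℝ} (hf : Measurable f)
    {C : ℝ} (hC : ∀ x ∈ Icc (0:ℝ) 1, |f x| ≤ C) : Integrable f P :=
  Integrable.mono' (integrable_const C) hf.aestronglyMeasurable
    (hae.mono fun x hx => by simpa [Real.norm_eq_abs] using hC x hx)

lemma S1_maps : ∀ x ∈ Icc (0:ℝ) 1, S1 x ∈ Icc (0:ℝ) 1 := by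
  intro x hx; simp only [S1, mem_Icc] at *; constructor <;> linarith [hx.1, hx.2]

lemma S2_maps : ∀ x ∈ Icc (0:ℝ) 1, S2 x ∈ Icc (0:ℝ) 1 := by
  intro x hx; simp only [S2, mem_Icc] at *; constructor <;> linarith [hx.1, hx.2]

lemma split (hP : SelfSimilar P) (hae : ∀ᵐ x ∂P, x ∈ Icc (0:ℝ) 1)
    {f : ℝ → ℝ} (hf : Measurable f) {C : ℝ} (hC : ∀ x ∈ Icc (0:ℝ) 1, |f x| ≤ C) :
    ∫ x, f x ∂P = 1/4 * ∫ x, f (S1 x) ∂P + 3/4 * ∫ x, f (S2 x) ∂P := by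
  haveI h1p : IsProbabilityMeasure (P.map S1) := Measure.isProbabilityMeasure_map measurable_S1.aemeasurable
  haveI h2p : IsProbabilityMeasure (P.map S2) := Measure.isProbabilityMeasure_map measurable_S2.aemeasurable
  have hae1 : ∀ᵐ y ∂(P.map S1), y ∈ Icc (0:ℝ) 1 := by
    exact (ae_map_iff (p := fun y => y ∈ Icc (0:ℝ) 1) measurable_S1.aemeasurable
      measurableSet_Icc).2 (hae.mono fun x hx => S1_maps x hx)
  have hae2 : ∀ᵐ y ∂(P.map S2), y ∈ Icc (0:ℝ) 1 := by
    exact (ae_map_iff (p := fun y => y ∈ Icc (0:ℝ) 1) measurable_S2.aemeasurable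
      measurableSet_Icc).2 (hae.mono fun x hx => S2_maps x hx)
  have hi1 : Integrable f (P.map S1) :=
    Integrable.mono' (integrable_const C) hf.aestronglyMeasurable
      (hae1.mono fun x hx => by simpa [Real.norm_eq_abs] using hC x hx)
  have hi2 : Integrable f (P.map S2) :=
    Integrable.mono' (integrable_const C) hf.aestronglyMeasurable
      (hae2.mono fun x hx => by simpa [Real.norm_eq_abs] using hC x hx)
  calc ∫ x, f x ∂P
      = ∫ x, f x ∂((1/4 : ℝ≥0∞) • P.map S1 + (3/4 : ℝ≥0∞) • P.map S2) := by rw [← hP]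
    _ = ∫ x, f x ∂((1/4 : ℝ≥0∞) • P.map S1) + ∫ x, f x ∂((3/4 : ℝ≥0∞) • P.map S2) :=
        integral_add_measure (hi1.smul_measure (by simp [ENNReal.div_eq_top])) (hi2.smul_measure (by simp [ENNReal.div_eq_top]))
    _ = (1/4 : ℝ≥0∞).toReal • ∫ x, f x ∂(P.map S1) + (3/4 : ℝ≥0∞).toReal • ∫ x, f x ∂(P.map S2) := by
        rw [integral_smul_measure, integral_smul_measure]
    _ = 1/4 * ∫ x, f (S1 x) ∂P + 3/4 * ∫ x, f (S2 x) ∂P := by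
        rw [integral_map measurable_S1.aemeasurable hf.aestronglyMeasurable,
          integral_map measurable_S2.aemeasurable hf.aestronglyMeasurable]
        norm_num [ENNReal.toReal_div, smul_eq_mul]

lemma moment1 (hP : SelfSimilar P) (hae : ∀ᵐ x ∂P, x ∈ Icc (0:ℝ) 1) :
    ∫ x, x ∂P = 2/3 := by
  have hid : Integrable (fun x : ℝ => x) P :=
    integrable_of_bdd P hae measurable_id (C := 1)
      (fun x hx => by rw [mem_Icc] at hx; rw [abs_le]; exact ⟨by linarith [hx.1], hx.2⟩)
  have h := split P hP hae (f := fun x => x) measurable_id (C := 1)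
      (fun x hx => by rw [mem_Icc] at hx; rw [abs_le]; exact ⟨by linarith [hx.1], hx.2⟩)
  simp only [S1, S2, id_eq] at h
  have e1 : ∫ x, x / 4 ∂P = (∫ x, x ∂P) / 4 := integral_div 4 _
  have e2 : ∫ x, (x / 2 + 1/2) ∂P = (∫ x, x ∂P) / 2 + 1/2 := by
    rw [integral_add (hid.div_const 2) (integrable_const _), integral_div, integral_const]
    simp
  rw [e1, e2] at h
  linarith

lemma moment2 (hP : SelfSimilar P) (hae : ∀ᵐ x ∂P, x ∈ Icc (0:ℝ) 1) :
    ∫ x, x^2 ∂P = 28/51 := by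
  have hid : Integrable (fun x : ℝ => x) P :=
    integrable_of_bdd P hae measurable_id (C := 1)
      (fun x hx => by rw [mem_Icc] at hx; rw [abs_le]; exact ⟨by linarith [hx.1], hx.2⟩)
  have hsq : Integrable (fun x : ℝ => x^2) P :=
    integrable_of_bdd P hae (by fun_prop) (C := 1)
      (fun x hx => by
        simp only [mem_Icc] at hx
        have : |x^2| ≤ 1 := by rw [abs_le]; constructor <;> nlinarith [hx.1, hx.2]
        simpa using this)
  have h := split P hP hae (f := fun x => x^2) (by fun_prop) (C := 1)
      (fun x hx => by
        simp only [mem_Icc] at hx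
        have : |x^2| ≤ 1 := by rw [abs_le]; constructor <;> nlinarith [hx.1, hx.2]
        simpa using this)
  simp only [S1, S2] at h
  have e1 : ∫ x, (x/4)^2 ∂P = (∫ x, x^2 ∂P) / 16 := by
    rw [show (fun x : ℝ => (x/4)^2) = fun x : ℝ => (x^2)/16 by funext x; ring]
    exact integral_div 16 _
  have e2 : ∫ x, (x/2 + 1/2)^2 ∂P = (∫ x, x^2 ∂P) / 4 + ((∫ x, x ∂P) / 2 + 1/4) := by
    have h1 : ∫ x, (x^2/4 + x/2) ∂P = (∫ x, x^2 ∂P)/4 + (∫ x, x ∂P)/2 :=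
      by rw [integral_add (hsq.div_const 4) (hid.div_const 2), integral_div, integral_div]
    have h2 : ∫ x, ((x^2/4 + x/2) + 1/4) ∂P = (∫ x, (x^2/4 + x/2) ∂P) + 1/4 := by
      have hsum : Integrable (fun x : ℝ => x^2/4 + x/2) P :=
        (hsq.div_const 4).add (hid.div_const 2)
      rw [integral_add hsum (integrable_const _), integral_const]
      simp
    calc ∫ x, (x/2 + 1/2)^2 ∂P = ∫ x, ((x^2/4 + x/2) + 1/4) ∂P := by
          congr 1; funext x; ring
      _ = (∫ x, x^2 ∂P) / 4 + ((∫ x, x ∂P) / 2 + 1/4) := by rw [h2, h1]; ring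
  rw [e1, e2, moment1 P hP hae] at h
  linarith

lemma Sw_maps (σ : List (Fin 2)) : ∀ x ∈ Icc (0:ℝ) 1, Sw σ x ∈ Icc (0:ℝ) 1 := by
  induction σ with
  | nil => intro x hx; simpa [Sw] using hx
  | cons i τ ih =>
    intro x hx
    by_cases h : i = 0
    · simpa [Sw, h] using S1_maps _ (ih x hx)
    · simpa [Sw, h] using S2_maps _ (ih x hx)

lemma J_subset (σ : List (Fin 2)) : J σ ⊆ Icc (0:ℝ) 1 := by
  rintro y ⟨x, hx, rfl⟩; exact Sw_maps σ x hx

lemma sw_pos (σ : List (Fin 2)) : 0 < sw σ := by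
  induction σ with
  | nil => norm_num [sw]
  | cons i τ ih => by_cases h : i = 0 <;> simp [sw, h] <;> positivity

lemma Sw_affine (σ : List (Fin 2)) : ∀ x, Sw σ x = sw σ * x + Sw σ 0 := by
  induction σ with
  | nil => intro x; simp [Sw, sw]
  | cons i τ ih =>
    intro x
    by_cases h : i = 0 <;>
      simp only [Sw, sw, h, if_true, if_false, Function.comp_apply, S1, S2] <;>
      rw [ih x, ih 0] <;> ring

lemma J_eq (σ : List (Fin 2)) : J σ = Icc (Sw σ 0) (Sw σ 0 + sw σ) := by
  have hc := sw_pos σ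
  ext y
  simp only [J, mem_image, mem_Icc]
  constructor
  · rintro ⟨x, ⟨hx0, hx1⟩, rfl⟩
    rw [Sw_affine σ x]
    constructor <;> nlinarith
  · rintro ⟨h0, h1⟩
    refine ⟨(y - Sw σ 0) / sw σ, ⟨?_, ?_⟩, ?_⟩
    · apply div_nonneg _ hc.le; linarith
    · rw [div_le_one hc]; linarith
    · rw [Sw_affine σ]; field_simp; ring

lemma J_meas (σ : List (Fin 2)) : MeasurableSet (J σ) := by
  rw [J_eq]; exact measurableSet_Icc

lemma J_cons_0 (τ : List (Fin 2)) : J ((0 : Fin 2) :: τ) = S1 '' J τ := by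
  simp only [J, Sw, if_true, reduceIte, image_comp]

lemma J_cons_1 (τ : List (Fin 2)) : J ((1 : Fin 2) :: τ) = S2 '' J τ := by
  have : ((1 : Fin 2) = 0) = False := by simp
  simp only [J, Sw, this, if_false, image_comp]

end Aux

theorem stmt_6 (P : Measure ℝ) [IsProbabilityMeasure P] (hP : SelfSimilar P)
    (σ : List (Fin 2)) (a : ℝ) :
    ∫ x in J σ, (x - a) ^ 2 ∂P =
      pw σ * (sw σ ^ 2 * (16 / 153) + (Sw σ (2 / 3) - a) ^ 2) := by
  have hae := ae_mem_Icc P hP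
  induction σ generalizing a with
  | nil =>
    have hJ : J ([] : List (Fin 2)) = Icc (0:ℝ) 1 := by simp [J, Sw]
    have hres : P.restrict (J ([] : List (Fin 2))) = P := by
      rw [hJ]; exact Measure.restrict_eq_self_of_ae_mem hae
    have hid : Integrable (fun x : ℝ => x) P :=
      integrable_of_bdd P hae measurable_id (C := 1)
        (fun x hx => by rw [mem_Icc] at hx; rw [abs_le]; exact ⟨by linarith [hx.1], hx.2⟩)
    have hsq : Integrable (fun x : ℝ => x^2) P :=
      integrable_of_bdd P hae (by fun_prop) (C := 1)
        (fun x hx => by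
          simp only [mem_Icc] at hx
          have : |x^2| ≤ 1 := by rw [abs_le]; constructor <;> nlinarith [hx.1, hx.2]
          simpa using this)
    rw [show (∫ x in J ([] : List (Fin 2)), (x - a) ^ 2 ∂P) = ∫ x, (x - a)^2 ∂P by rw [hres]]
    have h0 : ∫ x, (x - a)^2 ∂P = ∫ x, (x^2 - 2*a*x + a^2) ∂P := by
      congr 1; funext x; ring
    have h1 : Integrable (fun x : ℝ => x^2 - 2*a*x) P := hsq.sub (hid.const_mul (2*a))
    rw [h0, integral_add h1 (integrable_const _), integral_sub hsq (hid.const_mul (2*a)),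
      integral_const_mul, moment1 P hP hae, moment2 P hP hae, integral_const]
    simp only [pw, sw, Sw, id_eq, measure_univ, ENNReal.toReal_one, probReal_univ, smul_eq_mul, one_mul]
    ring
  | cons i τ ih =>
    have hJm := J_meas (i :: τ)
    have hfm : Measurable (fun x : ℝ => (x - a)^2) := by fun_prop
    have hgm : Measurable ((J (i :: τ)).indicator (fun x => (x - a)^2)) := hfm.indicator hJm
    have hbd : ∀ x ∈ Icc (0:ℝ) 1,
        |(J (i :: τ)).indicator (fun x => (x - a)^2) x| ≤ (1 + |a|)^2 := by
      intro x hx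
      simp only [mem_Icc] at hx
      have hb : |(x - a)^2| ≤ (1 + |a|)^2 := by
        rw [abs_of_nonneg (sq_nonneg _)]
        have hf1 : 0 ≤ 1 + |a| - x + a := by nlinarith [neg_abs_le a, hx.1, hx.2]
        have hf2 : 0 ≤ 1 + |a| + x - a := by nlinarith [le_abs_self a, hx.1, hx.2]
        nlinarith [mul_nonneg hf1 hf2]
      by_cases hmem : x ∈ J (i :: τ)
      · rwa [indicator_of_mem hmem]
      · rw [indicator_of_notMem hmem]; simp; positivity
    have hsplit := split P hP hae hgm hbd
    have hL : ∫ x in J (i :: τ), (x - a)^2 ∂P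
        = ∫ x, (J (i :: τ)).indicator (fun x => (x - a)^2) x ∂P := (integral_indicator hJm).symm
    have hi2 : i = 0 ∨ i = 1 := by fin_cases i <;> simp
    rcases hi2 with rfl | rfl
    · -- i = 0
      have hJc := J_cons_0 τ
      have hpre : S1 ⁻¹' (J ((0:Fin 2) :: τ)) = J τ := by
        rw [hJc, preimage_image_eq _ S1_inj]
      have hind1 : ∀ x, (J ((0:Fin 2)::τ)).indicator (fun x => (x - a)^2) (S1 x)
          = (J τ).indicator (fun y => (S1 y - a)^2) x := by
        intro x
        by_cases hx : x ∈ J τ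
        · rw [indicator_of_mem hx]
          have : S1 x ∈ J ((0:Fin 2)::τ) := by rw [← hpre] at hx; exact hx
          rw [indicator_of_mem this]
        · have : S1 x ∉ J ((0:Fin 2)::τ) := by rw [← hpre] at hx; exact hx
          rw [indicator_of_notMem hx, indicator_of_notMem this]
      have hzero : ∀ᵐ x ∂P, (J ((0:Fin 2)::τ)).indicator (fun x => (x - a)^2) (S2 x) = 0 := by
        filter_upwards [hae] with x hx
        have hnot : S2 x ∉ J ((0:Fin 2)::τ) := by
          rw [hJc]
          rintro ⟨y, hy, he⟩
          have hy1 := J_subset τ hy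
          simp only [mem_Icc] at hx hy1
          simp only [S1, S2] at he
          linarith [hy1.2, hx.1]
        exact indicator_of_notMem hnot _
      have hz : ∫ x, (J ((0:Fin 2)::τ)).indicator (fun x => (x - a)^2) (S2 x) ∂P = 0 :=
        integral_eq_zero_of_ae hzero
      have h1 : ∫ x, (J ((0:Fin 2)::τ)).indicator (fun x => (x - a)^2) (S1 x) ∂P
          = ∫ x in J τ, (S1 x - a)^2 ∂P := by
        simp only [hind1]
        exact integral_indicator (J_meas τ)
      have hfac : ∫ x in J τ, (S1 x - a)^2 ∂P = 1/16 * ∫ x in J τ, (x - 4*a)^2 ∂P := by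
        rw [show (fun x => (S1 x - a)^2) = fun x => 1/16 * ((x - 4*a)^2) by
          funext x; simp only [S1]; ring]
        exact integral_const_mul _ _
      rw [hL, hsplit, h1, hz, mul_zero, add_zero, hfac, ih (4*a)]
      simp only [pw, sw, Sw, S1, Function.comp_apply, reduceIte]
      ring
    · -- i = 1
      have hJc := J_cons_1 τ
      have hpre : S2 ⁻¹' (J ((1:Fin 2) :: τ)) = J τ := by
        rw [hJc, preimage_image_eq _ S2_inj]
      have hind1 : ∀ x, (J ((1:Fin 2)::τ)).indicator (fun x => (x - a)^2) (S2 x)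
          = (J τ).indicator (fun y => (S2 y - a)^2) x := by
        intro x
        by_cases hx : x ∈ J τ
        · rw [indicator_of_mem hx]
          have : S2 x ∈ J ((1:Fin 2)::τ) := by rw [← hpre] at hx; exact hx
          rw [indicator_of_mem this]
        · have : S2 x ∉ J ((1:Fin 2)::τ) := by rw [← hpre] at hx; exact hx
          rw [indicator_of_notMem hx, indicator_of_notMem this]
      have hzero : ∀ᵐ x ∂P, (J ((1:Fin 2)::τ)).indicator (fun x => (x - a)^2) (S1 x) = 0 := by
        filter_upwards [hae] with x hx
        have hnot : S1 x ∉ J ((1:Fin 2)::τ) := by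
          rw [hJc]
          rintro ⟨y, hy, he⟩
          have hy1 := J_subset τ hy
          simp only [mem_Icc] at hx hy1
          simp only [S1, S2] at he
          linarith [hy1.1, hx.2]
        exact indicator_of_notMem hnot _
      have hz : ∫ x, (J ((1:Fin 2)::τ)).indicator (fun x => (x - a)^2) (S1 x) ∂P = 0 :=
        integral_eq_zero_of_ae hzero
      have h1 : ∫ x, (J ((1:Fin 2)::τ)).indicator (fun x => (x - a)^2) (S2 x) ∂P
          = ∫ x in J τ, (S2 x - a)^2 ∂P := by
        simp only [hind1]
        exact integral_indicator (J_meas τ)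
      have hfac : ∫ x in J τ, (S2 x - a)^2 ∂P = 1/4 * ∫ x in J τ, (x - (2*a - 1))^2 ∂P := by
        rw [show (fun x => (S2 x - a)^2) = fun x => 1/4 * ((x - (2*a - 1))^2) by
          funext x; simp only [S2]; ring]
        exact integral_const_mul _ _
      rw [hL, hsplit, hz, mul_zero, zero_add, h1, hfac, ih (2*a - 1)]
      have h10 : ((1:Fin 2) = 0) = False := by simp
      simp only [pw, sw, Sw, S2, Function.comp_apply, h10, if_false]
      ring
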